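/- arXiv:math/0302036 — 8 statements merged into one kernel-verified Lean document; each statement's English description precedes it below -/
import Mathlib

section
/- For every real c > 1, the function (x,y) ↦ 4 / ((1+x²+y²)·((c+1)(x²+y²)+c−1)) is Lebesgue integrable on ℝ² and ∫_{ℝ²} 4 / ((1+x²+y²)((c+1)(x²+y²)+c−1)) dx dy = 2π · ln((c+1)/(c−1)). (This is the symplectic area V(c) of (S², π_c) for |c| > 1.) -/
/-!
The density is a function of `s = x² + y²`, so in polar coordinates the area is
`2π ∫₀^∞ r g(r²) dr` with `g(s) = 4 / ((1 + s)((c + 1)s + c − 1))`. By partial fractions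
`r g(r²)` is the derivative of `log((c + 1)r² + c − 1) − log(1 + r²)`, which increases from
`log(c − 1)` at `0` to `log(c + 1)` at infinity; since the integrand is nonnegative, this also
gives integrability.
-/

open MeasureTheory Set Real Filter Topology

section Radial

variable {E : Type*} [NormedAddCommGroup E] [NormedSpace ℝ E]

lemma polarCoord_symm_sq_add_sq (p : ℝ × ℝ) :
    (polarCoord.symm p).1 ^ 2 + (polarCoord.symm p).2 ^ 2 = p.1 ^ 2 := by
  simp only [polarCoord_symm_apply]
  linear_combination p.1 ^ 2 * cos_sq_add_sin_sq p.2

lemma integrable_comp_sq_add_sq_iff {f : ℝ → E} :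
    Integrable (fun p : ℝ × ℝ => f (p.1 ^ 2 + p.2 ^ 2)) ↔
      IntegrableOn (fun r => r • f (r ^ 2)) (Ioi 0) := by
  have hsource : IntegrableOn (fun p : ℝ × ℝ => f (p.1 ^ 2 + p.2 ^ 2)) polarCoord.source ↔
      Integrable (fun p : ℝ × ℝ => f (p.1 ^ 2 + p.2 ^ 2)) := by
    rw [IntegrableOn, Measure.restrict_congr_set polarCoord_source_ae_eq_univ,
      Measure.restrict_univ]
  rw [← hsource, ← polarCoord.symm_image_target_eq_source,
    integrableOn_image_iff_integrableOn_abs_det_fderiv_smul volume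
      polarCoord.open_target.measurableSet
      (fun p _ => (hasFDerivAt_polarCoord_symm p).hasFDerivWithinAt) polarCoord.symm.injOn]
  simp_rw [det_fderivPolarCoordSymm, polarCoord_symm_sq_add_sq]
  rw [polarCoord_target, IntegrableOn, Measure.volume_eq_prod, ← Measure.prod_restrict,
    Integrable.comp_fst_iff (f := fun r => |r| • f (r ^ 2)) (by simp [pi_pos])]
  exact integrableOn_congr_fun (fun r (hr : 0 < r) => by rw [abs_of_pos hr]) measurableSet_Ioi

lemma integral_comp_sq_add_sq (f : ℝ → E) :
    ∫ p : ℝ × ℝ, f (p.1 ^ 2 + p.2 ^ 2) = (2 * π) • ∫ r in Ioi 0, r • f (r ^ 2) := by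
  rw [← integral_comp_polarCoord_symm]
  simp_rw [polarCoord_symm_sq_add_sq]
  rw [polarCoord_target, Measure.volume_eq_prod, ← Measure.prod_restrict,
    integral_fun_fst (fun r => r • f (r ^ 2))]
  simp [pi_pos.le, two_mul]

end Radial

lemma integral_Ioi_mul_div_one_add_sq_mul {p q : ℝ} (hq : 0 < q) (hqp : q ≤ p) :
    IntegrableOn (fun r => r * (2 * (p - q) / ((1 + r ^ 2) * (p * r ^ 2 + q)))) (Ioi 0) ∧
      ∫ r in Ioi 0, r * (2 * (p - q) / ((1 + r ^ 2) * (p * r ^ 2 + q))) = log (p / q) := by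
  have hp : 0 < p := hq.trans_le hqp
  have hA (r : ℝ) : 0 < p * r ^ 2 + q := by positivity
  have hB (r : ℝ) : 0 < 1 + r ^ 2 := by positivity
  set F : ℝ → ℝ := fun r => log (p * r ^ 2 + q) - log (1 + r ^ 2)
  have hderiv (r : ℝ) :
      HasDerivAt F (r * (2 * (p - q) / ((1 + r ^ 2) * (p * r ^ 2 + q)))) r := by
    have hA' : HasDerivAt (fun r => p * r ^ 2 + q) (p * (2 * r)) r := by
      simpa using ((hasDerivAt_pow 2 r).const_mul p).add_const q
    have hB' : HasDerivAt (fun r => 1 + r ^ 2) (2 * r) r := by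
      simpa using (hasDerivAt_pow 2 r).const_add 1
    refine ((hA'.log (hA r).ne').sub (hB'.log (hB r).ne')).congr_deriv ?_
    rw [div_sub_div _ _ (hA r).ne' (hB r).ne', mul_div_assoc']
    congr 1 <;> ring
  have hlim : Tendsto F atTop (𝓝 (log p)) := by
    have hF : F = fun r => log (p - (p - q) / (1 + r ^ 2)) := by
      funext r
      simp only [F]
      rw [← log_div (hA r).ne' (hB r).ne']
      congr 1
      field_simp
      ring
    have hsq : Tendsto (fun r : ℝ => 1 + r ^ 2) atTop atTop :=
      tendsto_atTop_add_const_left _ _ (tendsto_pow_atTop two_ne_zero)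
    rw [hF]
    refine ((continuousAt_log hp.ne').tendsto.comp ?_)
    simpa using tendsto_const_nhds.sub (tendsto_const_nhds.div_atTop hsq)
  have hnonneg : ∀ r ∈ Ioi (0 : ℝ), 0 ≤ r * (2 * (p - q) / ((1 + r ^ 2) * (p * r ^ 2 + q))) :=
    fun r hr => mul_nonneg (le_of_lt hr) (div_nonneg (by linarith) (mul_pos (hB r) (hA r)).le)
  refine ⟨integrableOn_Ioi_deriv_of_nonneg' (fun r _ => hderiv r) hnonneg hlim, ?_⟩
  rw [integral_Ioi_of_hasDerivAt_of_nonneg' (fun r _ => hderiv r) hnonneg hlim,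
    log_div hp.ne' hq.ne']
  simp [F]

/-- For `c > 1`, the symplectic area of `(S², π_c)` in the stereographic chart:
the density `4 / ((1+x²+y²)((c+1)(x²+y²)+c−1))` is integrable on `ℝ²` with
integral `2π ln((c+1)/(c−1))`. -/
theorem symplectic_area_of_pi_c (c : ℝ) (hc : 1 < c) :
    Integrable (fun p : ℝ × ℝ =>
      4 / ((1 + p.1 ^ 2 + p.2 ^ 2) * ((c + 1) * (p.1 ^ 2 + p.2 ^ 2) + c - 1))) ∧
    ∫ p : ℝ × ℝ,
      4 / ((1 + p.1 ^ 2 + p.2 ^ 2) * ((c + 1) * (p.1 ^ 2 + p.2 ^ 2) + c - 1))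
      = 2 * Real.pi * Real.log ((c + 1) / (c - 1)) := by
  set f : ℝ → ℝ := fun s => 4 / ((1 + s) * ((c + 1) * s + c - 1))
  have hf_radial : (fun p : ℝ × ℝ =>
      4 / ((1 + p.1 ^ 2 + p.2 ^ 2) * ((c + 1) * (p.1 ^ 2 + p.2 ^ 2) + c - 1))) =
      fun p => f (p.1 ^ 2 + p.2 ^ 2) := by
    simp only [f, add_assoc]
  have hf_profile : (fun r => r • f (r ^ 2)) = fun r =>
      r * (2 * ((c + 1) - (c - 1)) / ((1 + r ^ 2) * ((c + 1) * r ^ 2 + (c - 1)))) := by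
    funext r
    simp only [f, smul_eq_mul, add_sub_assoc]
    ring
  obtain ⟨hint, hval⟩ :=
    integral_Ioi_mul_div_one_add_sq_mul (p := c + 1) (q := c - 1) (by linarith) (by linarith)
  rw [hf_radial, integrable_comp_sq_add_sq_iff, integral_comp_sq_add_sq, hf_profile, hval]
  exact ⟨hint, smul_eq_mul _ _⟩
end

section
/- Let c ∈ (−1,1) and g_c(x,y) = (1/4)(1+x²+y²)((c+1)(x²+y²)+c−1). There is no smooth function f : ℝ² → ℝ such that for all (x,y) ∈ ℝ²: g_c(x,y) ∂f/∂y (x,y) = −y and −g_c(x,y) ∂f/∂x (x,y) = x. That is, the rotation vector field Δ_ω = x ∂_y − y ∂_x (the modular vector field of π_c) is not a Hamiltonian vector field of π_c, so the modular class of π_c is nonzero. -/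
/-- Partial derivative in the `x`-direction of a function on `ℝ²`. -/
noncomputable def px (F : ℝ × ℝ → ℝ) (p : ℝ × ℝ) : ℝ := fderiv ℝ F p (1, 0)

/-- Partial derivative in the `y`-direction of a function on `ℝ²`. -/
noncomputable def py (F : ℝ × ℝ → ℝ) (p : ℝ × ℝ) : ℝ := fderiv ℝ F p (0, 1)

/-- The coefficient of the Poisson structure `π_c` in the stereographic chart. -/
noncomputable def gPi (c : ℝ) (p : ℝ × ℝ) : ℝ :=
  (1 / 4) * (1 + p.1 ^ 2 + p.2 ^ 2) * ((c + 1) * (p.1 ^ 2 + p.2 ^ 2) + c - 1)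

/-- For a necklace Poisson structure `π_c` (`|c| < 1`), the rotation vector
field `Δ_ω = x ∂_y − y ∂_x` (the modular vector field) is not Hamiltonian:
there is no smooth `f` with `X_f = (g_c ∂f/∂y, −g_c ∂f/∂x) = (−y, x)`. Hence
the modular class of `π_c` is nonzero. -/
theorem modular_class_nonzero (c : ℝ) (hc₁ : -1 < c) (hc₂ : c < 1) :
    ¬ ∃ f : ℝ × ℝ → ℝ, ContDiff ℝ (⊤ : ℕ∞) f ∧
      (∀ p : ℝ × ℝ, gPi c p * py f p = -p.2) ∧
      (∀ p : ℝ × ℝ, -(gPi c p * px f p) = p.1) := by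
  rintro ⟨f, -, -, h2⟩
  -- consider the point (√((1-c)/(1+c)), 0) on the necklace circle
  have hc1 : (0:ℝ) < c + 1 := by linarith
  have hs : (0:ℝ) < (1 - c) / (c + 1) := div_pos (by linarith) hc1
  set s : ℝ := (1 - c) / (c + 1) with hs_def
  have hx : (0:ℝ) < Real.sqrt s := Real.sqrt_pos.mpr hs
  set p : ℝ × ℝ := (Real.sqrt s, 0) with hp
  have hsq : p.1 ^ 2 + p.2 ^ 2 = s := by
    simp [hp, Real.sq_sqrt hs.le]
  have hg : gPi c p = 0 := by
    unfold gPi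
    rw [hsq]
    have : (c + 1) * s = 1 - c := by
      rw [hs_def, mul_comm]; exact div_mul_cancel₀ _ hc1.ne'
    rw [this]; ring
  have := h2 p
  rw [hg] at this
  simp only [zero_mul, neg_zero] at this
  exact hx.ne' this.symm
end

section
/- Define φ : ℝ² → ℝ² by φ(x,y) = ( x/√(1+x²+y²), y/√(1+x²+y²) ), a diffeomorphism onto the open unit disk. Then for every (x,y) ∈ ℝ²: (1) the determinant of the derivative of φ at (x,y) equals (1+x²+y²)^{−2}; and (2) for every c ∈ ℝ, g_c(x,y) · (1+x²+y²)^{−2} = h_c(φ(x,y)), where g_c(x,y) = (1/4)(1+x²+y²)((c+1)(x²+y²)+c−1) and h_c(s,t) = (1/2)(s²+t²−(1−c)/2). (Hence the pushforward of π_c = g_c ∂_x∧∂_y under φ is h_c ∂_s∧∂_t.) -/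
/-- The map `φ(x,y) = (x/√(1+x²+y²), y/√(1+x²+y²))` from the plane onto the
open unit disk. -/
noncomputable def phi (p : ℝ × ℝ) : ℝ × ℝ :=
  (p.1 / Real.sqrt (1 + p.1 ^ 2 + p.2 ^ 2), p.2 / Real.sqrt (1 + p.1 ^ 2 + p.2 ^ 2))

/-- The coefficient of the necklace Poisson structure in the disk coordinates. -/
noncomputable def hPi (c : ℝ) (q : ℝ × ℝ) : ℝ :=
  (1 / 2) * (q.1 ^ 2 + q.2 ^ 2 - (1 - c) / 2)

/-! `φ(q) = u(q) • q` with `u = (1 + ‖q‖²)^(-1/2)`, so `Dφ = u • id + ∇u ⊗ q` is a rank-one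
perturbation of a scalar, with determinant `u (u + Du q) = u · u³ = (1 + ‖q‖²)⁻²`.
Part (2) is algebra, using `‖φ q‖² = ‖q‖² / (1 + ‖q‖²)`. -/

theorem LinearMap.det_prod_self {R : Type*} [CommRing R] (f : R × R →ₗ[R] R × R) :
    LinearMap.det f = (f (1, 0)).1 * (f (0, 1)).2 - (f (0, 1)).1 * (f (1, 0)).2 := by
  rw [← LinearMap.det_toMatrix (Module.Basis.finTwoProd R), Matrix.det_fin_two]
  simp [LinearMap.toMatrix_apply]

theorem ContinuousLinearMap.det_smul_id_add_smulRight {R : Type*} [CommRing R]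
    [TopologicalSpace R] [IsTopologicalRing R] (a : R) (ℓ : R × R →L[R] R) (v : R × R) :
    (a • ContinuousLinearMap.id R (R × R) + ℓ.smulRight v).det = a * (a + ℓ v) := by
  rw [ContinuousLinearMap.det, LinearMap.det_prod_self]
  have hv : v = v.1 • ((1 : R), (0 : R)) + v.2 • ((0 : R), (1 : R)) := by ext <;> simp
  conv_rhs => rw [hv, map_add, map_smul, map_smul]
  simp only [ContinuousLinearMap.toLinearMap_add, ContinuousLinearMap.toLinearMap_smul,
    ContinuousLinearMap.coe_id, ContinuousLinearMap.coe_smulRight, LinearMap.add_apply,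
    LinearMap.smul_apply, LinearMap.id_coe, id_eq, Prod.smul_mk, smul_eq_mul, mul_one, mul_zero,
    LinearMap.coe_smulRight, ContinuousLinearMap.coe_coe, Prod.fst_add, Prod.smul_fst,
    Prod.snd_add, Prod.smul_snd, zero_add]
  ring

theorem phi_eq_smul : phi = fun q => (√(1 + q.1 ^ 2 + q.2 ^ 2))⁻¹ • q := by
  funext q
  ext <;> simp [phi, div_eq_inv_mul]

theorem det_fderiv_phi (p : ℝ × ℝ) :
    (fderiv ℝ phi p).det = ((1 + p.1 ^ 2 + p.2 ^ 2) ^ 2)⁻¹ := by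
  have hQ_pos : 0 < 1 + p.1 ^ 2 + p.2 ^ 2 := by positivity
  have hsqrt_ne : √(1 + p.1 ^ 2 + p.2 ^ 2) ≠ 0 := (Real.sqrt_pos.2 hQ_pos).ne'
  have hQ := ((hasFDerivAt_fst (𝕜 := ℝ) (p := p)).pow 2 |>.const_add 1).add
    ((hasFDerivAt_snd (𝕜 := ℝ) (p := p)).pow 2)
  have hu : HasFDerivAt (fun q : ℝ × ℝ => (√(1 + q.1 ^ 2 + q.2 ^ 2))⁻¹) _ p :=
    HasDerivAt.comp_hasFDerivAt (h₂ := fun t => (√t)⁻¹) p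
      ((Real.hasDerivAt_sqrt hQ_pos.ne').inv hsqrt_ne) hQ
  have hphi : HasFDerivAt (fun q : ℝ × ℝ => (√(1 + q.1 ^ 2 + q.2 ^ 2))⁻¹ • q) _ p :=
    hu.smul (hasFDerivAt_id p)
  rw [phi_eq_smul, hphi.fderiv, ContinuousLinearMap.det_smul_id_add_smulRight]
  simp only [nsmul_eq_mul, Nat.cast_ofNat, add_apply, smul_apply, ContinuousLinearMap.coe_fst',
    ContinuousLinearMap.coe_snd', smul_eq_mul]
  field_simp
  rw [show √(1 + p.1 ^ 2 + p.2 ^ 2) ^ 4 = (√(1 + p.1 ^ 2 + p.2 ^ 2) ^ 2) ^ 2 by ring,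
    Real.sq_sqrt hQ_pos.le]
  ring

theorem gPi_mul_inv_sq_eq_hPi_phi (c : ℝ) (p : ℝ × ℝ) :
    gPi c p * ((1 + p.1 ^ 2 + p.2 ^ 2) ^ 2)⁻¹ = hPi c (phi p) := by
  have hQ_pos : 0 < 1 + p.1 ^ 2 + p.2 ^ 2 := by positivity
  simp only [gPi, hPi, phi, div_pow, Real.sq_sqrt hQ_pos.le]
  field_simp
  ring

/-- The disk coordinates transform `π_c = g_c ∂_x∧∂_y` into `h_c ∂_s∧∂_t`:
(1) the Jacobian determinant of `φ` at `(x,y)` is `(1+x²+y²)⁻²`, and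
(2) `g_c(x,y)·(1+x²+y²)⁻² = h_c(φ(x,y))`. -/
theorem pushforward_pi_c_to_disk (p : ℝ × ℝ) :
    (fderiv ℝ phi p).det = ((1 + p.1 ^ 2 + p.2 ^ 2) ^ 2)⁻¹ ∧
    ∀ c : ℝ, gPi c p * ((1 + p.1 ^ 2 + p.2 ^ 2) ^ 2)⁻¹ = hPi c (phi p) :=
  ⟨det_fderiv_phi p, fun c => gPi_mul_inv_sq_eq_hPi_phi c p⟩
end

section
/- Let n be a nonzero integer and let a, b be formal power series over ℂ in the variable X, with D denoting the formal derivative. If X·(Da) − a + i·n·X·b = 0, then there exists a formal power series f over ℂ such that a = i·n·X·f and b = −X·(Df). (Every 1-cocycle in a nonzero Fourier mode of the Poisson complex of the formal neighborhood of the necklace is a coboundary: H¹_n = 0 for n ≠ 0.) -/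
/-!
The cocycle condition at `X = 0` forces `a(0) = 0`, so `a = c X f` for some `f` once
`c = i n ≠ 0`. Substituting, `X a′ − a = c X² f′`, so the cocycle condition becomes
`c X (X f′ + b) = 0`, and `b = −X f′` because `K⟦X⟧` is a domain.
-/

open PowerSeries

theorem PowerSeries.X_mul_derivative_C_mul_X_mul_sub {R : Type*} [CommRing R] (c : R)
    (f : R⟦X⟧) :
    X * derivative R (C c * X * f) - C c * X * f = C c * X ^ 2 * derivative R f := by
  simp only [Derivation.leibniz, derivative_C, derivative_X, smul_eq_mul]
  ring

theorem PowerSeries.exists_eq_C_mul_X_mul_and_eq_neg_X_mul_derivative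
    {K : Type*} [Field K] {c : K} (hc : c ≠ 0) {a b : K⟦X⟧}
    (hcocycle : X * derivative K a - a + C c * X * b = 0) :
    ∃ f : K⟦X⟧, a = C c * X * f ∧ b = -(X * derivative K f) := by
  have ha₀ : constantCoeff a = 0 := by
    simpa using congrArg constantCoeff hcocycle
  obtain ⟨g, rfl⟩ := X_dvd_iff.mpr ha₀
  have hg : X * g = C c * X * (C c⁻¹ * g) := by
    rw [mul_right_comm, ← mul_assoc (C c), ← map_mul, mul_inv_cancel₀ hc, map_one, one_mul,
      mul_comm]
  set f := C c⁻¹ * g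
  refine ⟨f, hg, ?_⟩
  rw [hg, X_mul_derivative_C_mul_X_mul_sub] at hcocycle
  have hcX : C c * X ≠ (0 : K⟦X⟧) := mul_ne_zero (by simpa using hc) X_ne_zero
  have hsum : C c * X * (X * derivative K f + b) = 0 := by
    rw [← hcocycle]
    ring
  exact eq_neg_of_add_eq_zero_right ((mul_eq_zero.mp hsum).resolve_left hcX)

/-- In a nonzero Fourier mode `n` of the Poisson complex of the formal
neighborhood of the necklace, every 1-cocycle `(a, b)` (i.e. with
`X·a′ − a + i n X·b = 0`) is the coboundary of a 0-cochain `f`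
(i.e. `a = i n X f`, `b = −X f′`): `H¹_n = 0` for `n ≠ 0`. -/
theorem formal_mode_H1_trivial (n : ℤ) (hn : n ≠ 0) (a b : PowerSeries ℂ)
    (hcocycle : X * derivative ℂ a - a + C (Complex.I * n) * X * b = 0) :
    ∃ f : PowerSeries ℂ,
      a = C (Complex.I * n) * X * f ∧ b = -(X * derivative ℂ f) :=
  exists_eq_C_mul_X_mul_and_eq_neg_X_mul_derivative
    (mul_ne_zero Complex.I_ne_zero (Int.cast_ne_zero.mpr hn)) hcocycle
end

section
/- Let n be a nonzero integer. For every formal power series c over ℂ in the variable X, there exist formal power series a, b over ℂ such that X·(Da) − a + i·n·X·b = c, where D denotes the formal derivative. (Every 2-cochain in a nonzero Fourier mode of the Poisson complex of the formal neighborhood of the necklace is a coboundary: H²_n = 0 for n ≠ 0.) -/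
open PowerSeries

theorem PowerSeries.exists_X_mul_derivative_sub_add_C_mul_X_mul_eq {R : Type*} [CommRing R]
    {u : R} (hu : IsUnit u) (c : R⟦X⟧) :
    ∃ a b : R⟦X⟧, X * derivative R a - a + C u * X * b = c := by
  -- A constant `a` absorbs the constant term of `c`; the remainder is `X` times a shift of `c`.
  refine ⟨-C (constantCoeff c), C (↑hu.unit⁻¹ : R) * mk fun p => coeff (p + 1) c, ?_⟩
  have hcancel : C u * C (↑hu.unit⁻¹ : R) = (1 : R⟦X⟧) := by
    rw [← map_mul, IsUnit.mul_val_inv, map_one]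
  calc X * derivative R (-C (constantCoeff c)) - -C (constantCoeff c)
          + C u * X * (C (↑hu.unit⁻¹ : R) * mk fun p => coeff (p + 1) c)
        = (X * mk fun p => coeff (p + 1) c) + C (constantCoeff c) := by
          rw [map_neg, derivative_C, mul_mul_mul_comm, hcancel]
          ring
      _ = c := (eq_X_mul_shift_add_const c).symm

/-- In a nonzero Fourier mode `n` of the Poisson complex of the formal
neighborhood of the necklace, every 2-cochain `c` is a coboundary: there is a
1-cochain `(a, b)` with `X·a′ − a + i n X·b = c`. Hence `H²_n = 0` for `n ≠ 0`. -/
theorem formal_mode_H2_trivial (n : ℤ) (hn : n ≠ 0) (c : PowerSeries ℂ) :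
    ∃ a b : PowerSeries ℂ,
      X * derivative ℂ a - a + C (Complex.I * n) * X * b = c :=
  exists_X_mul_derivative_sub_add_C_mul_X_mul_eq
    (isUnit_iff_ne_zero.mpr (mul_ne_zero Complex.I_ne_zero (Int.cast_ne_zero.mpr hn))) c
end

section
/- Let a, b be formal power series over ℝ in the variable X with D the formal derivative, and suppose X·(Da) − a = 0. Then there exist unique λ, μ ∈ ℝ and a unique formal power series f over ℝ with constant coefficient 0 such that a = λ·X and b = μ·1 − X·(Df). (The first cohomology of the rotation-invariant (zero Fourier mode) part of the Poisson complex of the formal neighborhood of the necklace is two-dimensional, spanned by the classes of the rotation ∂_θ and the dilation I ∂_I.) -/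
/-!
A 1-cocycle `(a, b)` only constrains `a`: coefficientwise `X·a′ = a` reads `n·aₙ = aₙ`, so `a`
is a multiple of `X`. The Euler operator `X·d/dX` multiplies the `n`-th coefficient by `n`, so
over a field of characteristic zero it is a bijection of the series without constant term;
hence every `b` is its constant term minus `X·f′` for exactly one `f` with `f(0) = 0`.
-/

open PowerSeries

namespace PowerSeries

theorem coeff_X_mul_derivative {R : Type*} [CommSemiring R] (f : R⟦X⟧) (n : ℕ) :
    coeff n (X * d⁄dX R f) = n * coeff n f := by
  cases n with
  | zero => simp
  | succ n => rw [coeff_succ_X_mul, coeff_derivative, mul_comm, Nat.cast_succ]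

section TorsionFree

variable {R : Type*} [CommRing R] [IsAddTorsionFree R]

theorem eq_C_mul_X_of_X_mul_derivative_eq_self {a : R⟦X⟧} (h : X * d⁄dX R a = a) :
    a = C (coeff 1 a) * X := by
  ext n
  have hn : (n : R) * coeff n a = coeff n a := by rw [← coeff_X_mul_derivative, h]
  rw [coeff_C_mul, coeff_X]
  match n, hn with
  | 0, hn => simpa using hn.symm
  | 1, _ => simp
  | k + 2, hn =>
    have hk : (k + 1) • coeff (k + 2) a = 0 := by
      rw [nsmul_eq_mul]
      push_cast at hn ⊢
      linear_combination hn
    simpa using (nsmul_eq_zero_iff_right k.succ_ne_zero).1 hk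

theorem eq_and_eq_of_C_sub_X_mul_derivative_eq {m m' : R} {f f' : R⟦X⟧}
    (hf : constantCoeff f = 0) (hf' : constantCoeff f' = 0)
    (h : C m - X * d⁄dX R f = C m' - X * d⁄dX R f') : m = m' ∧ f = f' := by
  have hm : m = m' := by simpa using congrArg constantCoeff h
  subst hm
  refine ⟨rfl, derivative.ext ?_ (hf.trans hf'.symm)⟩
  exact X_mul_cancel (sub_right_injective h)

end TorsionFree

theorem exists_eq_C_sub_X_mul_derivative {K : Type*} [Field K] [CharZero K] (b : K⟦X⟧) :
    ∃ f : K⟦X⟧, constantCoeff f = 0 ∧ b = C (constantCoeff b) - X * d⁄dX K f := by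
  -- at `n = 0` the junk value `x / 0 = 0` gives the constant coefficient `0`
  refine ⟨mk fun n => -coeff n b / n, by simp, ?_⟩
  ext n
  rw [map_sub, coeff_X_mul_derivative, coeff_mk, coeff_C]
  cases n with
  | zero => simp
  | succ n =>
    have hn : ((n + 1 : ℕ) : K) ≠ 0 := Nat.cast_ne_zero.2 n.succ_ne_zero
    field_simp
    simp

end PowerSeries

/-- Zero Fourier mode of the formal Poisson complex of the necklace: a
1-cocycle `(a, b)` (i.e. `X·a′ − a = 0`) is, uniquely modulo coboundaries
`(0, −X f′)` with `f(0) = 0`, a combination `λ·(X, 0) + μ·(0, 1)` of the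
dilation `I ∂_I` and the rotation `∂_θ`: the first cohomology of the
invariant part is two-dimensional. -/
theorem formal_mode_zero_H1 (a b : PowerSeries ℝ)
    (hcocycle : X * derivative ℝ a - a = 0) :
    ∃! lmf : ℝ × ℝ × PowerSeries ℝ,
      constantCoeff lmf.2.2 = 0 ∧
      a = C lmf.1 * X ∧
      b = C lmf.2.1 * 1 - X * derivative ℝ lmf.2.2 := by
  obtain ⟨f, hf0, hb⟩ := exists_eq_C_sub_X_mul_derivative b
  refine ⟨(coeff 1 a, constantCoeff b, f),
    ⟨hf0, eq_C_mul_X_of_X_mul_derivative_eq_self (sub_eq_zero.1 hcocycle), by rwa [mul_one]⟩, ?_⟩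
  rintro ⟨l, m, g⟩ ⟨hg0, ha, hbg⟩
  rw [mul_one] at hbg
  obtain ⟨rfl, rfl⟩ := eq_and_eq_of_C_sub_X_mul_derivative_eq hg0 hf0 (hbg.symm.trans hb)
  simp [ha]
end

section
/- For every formal power series h over ℝ in the variable X, there exist a unique λ ∈ ℝ and a unique formal power series a over ℝ whose coefficient of X is 0 such that h = λ·X + X·(Da) − a, where D denotes the formal derivative. (The second cohomology of the rotation-invariant (zero Fourier mode) part of the Poisson complex of the formal neighborhood of the necklace is one-dimensional, spanned by the class of π_c = I ∂_I∧∂_θ itself.) -/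
/-!
On the monomial `X ^ n` the coboundary operator `a ↦ X • a′ - a` acts as multiplication by
`n - 1`. It is therefore invertible on every coefficient except that of `X`, which is hit only
by the class `λ • X` of the Poisson structure: `λ` is forced to be the coefficient of `X` in `h`
and `a` to be `∑ hₙ / (n - 1) • Xⁿ` over `n ≠ 1`.
-/

open PowerSeries

namespace PowerSeries

variable {R : Type*} [CommRing R]

theorem coeff_X_mul_derivative_sub (a : R⟦X⟧) (n : ℕ) :
    coeff n (X * derivative R a - a) = ((n : R) - 1) * coeff n a := by
  cases n with
  | zero => simp
  | succ m =>
    rw [map_sub, coeff_succ_X_mul, coeff_derivative]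
    push_cast
    ring

theorem coeff_C_mul_X_add_X_mul_derivative_sub (l : R) (a : R⟦X⟧) (n : ℕ) :
    coeff n (C l * X + X * derivative R a - a) =
      (if n = 1 then l else 0) + ((n : R) - 1) * coeff n a := by
  rw [add_sub_assoc, map_add, coeff_X_mul_derivative_sub, coeff_C_mul, coeff_X, mul_ite, mul_one,
    mul_zero]

variable {K : Type*} [Field K] [CharZero K]

/-- At `n = 1` the formula for `a` divides by `0`, and the junk value `0` is exactly the
normalization `coeff 1 a = 0`. -/
theorem coeff_one_eq_zero_and_eq_C_mul_X_add_X_mul_derivative_sub_iff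
    (h a : K⟦X⟧) (l : K) :
    (coeff 1 a = 0 ∧ h = C l * X + X * derivative K a - a) ↔
      (l = coeff 1 h ∧ a = mk fun n => coeff n h / ((n : K) - 1)) := by
  have hcoeff : ∀ n, coeff n (C l * X + X * derivative K a - a) =
      (if n = 1 then l else 0) + ((n : K) - 1) * coeff n a :=
    coeff_C_mul_X_add_X_mul_derivative_sub l a
  have hfactor : ∀ n : ℕ, n ≠ 1 → (n : K) - 1 ≠ 0 := fun n hn =>
    sub_ne_zero.mpr (Nat.cast_ne_one.mpr hn)
  constructor
  · rintro ⟨ha1, rfl⟩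
    refine ⟨by simp [hcoeff], ?_⟩
    ext n
    rcases eq_or_ne n 1 with rfl | hn
    · simp [ha1]
    · rw [coeff_mk, hcoeff, if_neg hn, zero_add, mul_div_cancel_left₀ _ (hfactor n hn)]
  · rintro ⟨rfl, rfl⟩
    refine ⟨by simp, ?_⟩
    ext n
    rw [hcoeff, coeff_mk]
    rcases eq_or_ne n 1 with rfl | hn
    · simp
    · rw [if_neg hn, zero_add, mul_div_cancel₀ _ (hfactor n hn)]

end PowerSeries

/-- Zero Fourier mode of the formal Poisson complex of the necklace: every
2-cochain `h` is, uniquely, `λ·X` plus a coboundary `X·a′ − a` with the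
coefficient of `X` in `a` equal to `0`: the second cohomology of the
invariant part is one-dimensional, spanned by `π_c = I ∂_I ∧ ∂_θ` itself. -/
theorem formal_mode_zero_H2 (h : PowerSeries ℝ) :
    ∃! la : ℝ × PowerSeries ℝ,
      coeff 1 la.2 = 0 ∧
      h = C la.1 * X + X * derivative ℝ la.2 - la.2 := by
  simp only [coeff_one_eq_zero_and_eq_C_mul_X_add_X_mul_derivative_sub_iff]
  exact ⟨(coeff 1 h, mk fun n => coeff n h / ((n : ℝ) - 1)), ⟨rfl, rfl⟩,
    fun la hla => Prod.ext hla.1 hla.2⟩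
end

section
/- Let c ∈ (−1,1) and g_c(x,y) = (1/4)(1+x²+y²)((c+1)(x²+y²)+c−1). If f : ℝ² → ℝ is smooth and satisfies g_c(x,y) · ∂f/∂x (x,y) = 0 and g_c(x,y) · ∂f/∂y (x,y) = 0 for all (x,y) ∈ ℝ², then f is constant. (Every Casimir function of the necklace Poisson structure π_c is constant: H⁰_{π_c} = ℝ.) -/
/-- Every Casimir function of a necklace Poisson structure `π_c` (`|c| < 1`)
is constant: if the Hamiltonian vector field `X_f = (g_c ∂f/∂y, −g_c ∂f/∂x)`
of a smooth `f` vanishes identically, then `f` is constant. -/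
theorem casimir_is_constant (c : ℝ) (hc₁ : -1 < c) (hc₂ : c < 1)
    (f : ℝ × ℝ → ℝ) (hf : ContDiff ℝ (⊤ : ℕ∞) f)
    (hx : ∀ p : ℝ × ℝ, gPi c p * px f p = 0)
    (hy : ∀ p : ℝ × ℝ, gPi c p * py f p = 0) :
    ∀ p q : ℝ × ℝ, f p = f q := by
  have hdiff : Differentiable ℝ f := hf.differentiable (by simp)
  have hcont : Continuous (fderiv ℝ f) := hf.continuous_fderiv (by simp)
  have key : ∀ p : ℝ × ℝ, gPi c p ≠ 0 → fderiv ℝ f p = 0 := by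
    intro p hg
    have h1 : fderiv ℝ f p (1, 0) = 0 :=
      (mul_eq_zero.1 (hx p)).resolve_left hg
    have h2 : fderiv ℝ f p (0, 1) = 0 :=
      (mul_eq_zero.1 (hy p)).resolve_left hg
    apply ContinuousLinearMap.ext
    rintro ⟨a, b⟩
    have hab : (a, b) = a • ((1:ℝ), (0:ℝ)) + b • ((0:ℝ), (1:ℝ)) := by
      simp [Prod.ext_iff]
    rw [hab, map_add, map_smul, map_smul, h1, h2]
    simp
  have hfd : ∀ p : ℝ × ℝ, fderiv ℝ f p = 0 := by
    intro p
    by_cases hg : gPi c p = 0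
    · have h1 : (0:ℝ) < 1 + p.1 ^ 2 + p.2 ^ 2 := by positivity
      have hs : (c + 1) * (p.1 ^ 2 + p.2 ^ 2) + c - 1 = 0 := by
        unfold gPi at hg
        rcases mul_eq_zero.1 hg with h | h
        · rcases mul_eq_zero.1 h with h' | h'
          · norm_num at h'
          · linarith
        · exact h
      have hcp : (0:ℝ) < c + 1 := by linarith
      have hspos : (0:ℝ) < p.1 ^ 2 + p.2 ^ 2 := by nlinarith [sq_nonneg p.1, sq_nonneg p.2]
      have heq : ∀ n : ℕ, fderiv ℝ f ((1 + 1 / (n + 1) : ℝ) • p) = 0 := by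
        intro n
        apply key
        set t : ℝ := 1 + 1 / (n + 1) with ht_def
        have ht : 1 < t := by
          rw [ht_def]
          have : (0:ℝ) < 1 / ((n : ℝ) + 1) := by positivity
          linarith
        have hA : (0:ℝ) < 1 + (t • p).1 ^ 2 + (t • p).2 ^ 2 := by positivity
        have hfst : (t • p).1 = t * p.1 := rfl
        have hsnd : (t • p).2 = t * p.2 := rfl
        have hB : (0:ℝ) < (c + 1) * ((t • p).1 ^ 2 + (t • p).2 ^ 2) + c - 1 := by
          rw [hfst, hsnd]
          nlinarith [mul_pos (mul_pos hcp hspos) (show (0:ℝ) < t ^ 2 - 1 by nlinarith)]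
        have : (0:ℝ) < gPi c (t • p) := by
          unfold gPi
          positivity
        exact ne_of_gt this
      have htend : Filter.Tendsto (fun n : ℕ => ((1 + 1 / (n + 1) : ℝ)) • p)
          Filter.atTop (nhds p) := by
        have h0 : Filter.Tendsto (fun n : ℕ => (1 + 1 / (n + 1) : ℝ)) Filter.atTop (nhds 1) := by
          have := tendsto_one_div_add_atTop_nhds_zero_nat (𝕜 := ℝ)
          simpa using tendsto_const_nhds.add this
        have := h0.smul (tendsto_const_nhds : Filter.Tendsto (fun _ : ℕ => p) Filter.atTop (nhds p))
        simpa using this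
      have hlim : Filter.Tendsto (fun n : ℕ => fderiv ℝ f ((1 + 1 / (n + 1) : ℝ) • p))
          Filter.atTop (nhds (fderiv ℝ f p)) := (hcont.tendsto p).comp htend
      exact tendsto_nhds_unique hlim
        ((tendsto_const_nhds : Filter.Tendsto (fun _ : ℕ => (0 : ℝ × ℝ →L[ℝ] ℝ))
          Filter.atTop (nhds 0)).congr (fun n => (heq n).symm))
    · exact key p hg
  intro p q
  exact is_const_of_fderiv_eq_zero hdiff hfd p q
end
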